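/- Suppose (u*, d*) solves min_{u,d} { D_f(u) + ι_U(u) + λ‖d‖₁ subject to ∇u = d } with Lagrange multiplier p*. If u^{k+1}, d^{k+1}, p^{k+1} satisfy the inexact ADMM optimality system (with proximal matrix L_k), then subtracting the KKT system of (u*,d*,p*) and taking inner products with the errors u_e^{k+1}=u^{k+1}−u*, d_e^{k+1}=d^{k+1}−d*, p_e^k yields ⟨∇D_f(uᵏ)−∇D_f(u*), u_e^{k+1}⟩ + ⟨r^{k+1}−r*, u_e^{k+1}⟩ + λ⟨s^{k+1}−s*, d_e^{k+1}⟩ + (1/2)(‖u_e^{k+1}‖²_{L_k} − ‖u_e^k‖²_{L_k} + ‖u^{k+1}−u^k‖²_{L_k}) + (1/(2α))(‖p_e^{k+1}‖₂² − ‖p_e^k‖₂²) − (α/2)‖d^{k+1}−∇u^{k+1}‖₂² + α⟨∇u_e^k − d_e^k, ∇u_e^{k+1}⟩ + α⟨d_e^{k+1} − ∇u_e^{k+1}, d_e^{k+1}⟩ = 0, where r ∈ ∂ι_U and s ∈ ∂‖·‖₁ are the respective subgradients. -/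
import Mathlib


open scoped RealInnerProductSpace

set_option maxHeartbeats 1000000 in
/-- For the inexact ADMM iterates (with proximal matrix `L_k`) of
`min { D_f(u) + ι_U(u) + λ‖d‖₁ : ∇u = d }`, subtracting the KKT system of a saddle
point `(u*, d*, p*)` and taking inner products with the errors yields the stated
algebraic identity. -/
theorem stmt9 {N : ℕ}
    (Grad : EuclideanSpace ℝ (Fin N) →L[ℝ] PiLp 2 (fun _ : Fin N => EuclideanSpace ℝ (Fin 2)))
    (Lk : EuclideanSpace ℝ (Fin N) →L[ℝ] EuclideanSpace ℝ (Fin N))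
    (hLk : IsSelfAdjoint Lk)
    (α lam : ℝ) (hα : 0 < α) (hlam : 0 < lam)
    (gradDk gradDstar rk1 rstar u0 u1 ustar : EuclideanSpace ℝ (Fin N))
    (d0 d1 dstar s1 sstar p0 p1 pstar : PiLp 2 (fun _ : Fin N => EuclideanSpace ℝ (Fin 2)))
    -- optimality system of the inexact ADMM step:
    (h1 : gradDk + Lk (u1 - u0) + α • Grad.adjoint (Grad u0 - d0 - α⁻¹ • p0) + rk1 = 0)
    (h2 : lam • s1 + α • (d1 - Grad u1 + α⁻¹ • p0) = 0)
    (h3 : p1 = p0 + α • (d1 - Grad u1))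
    -- KKT system at the saddle point:
    (h4 : gradDstar - Grad.adjoint pstar + rstar = 0)
    (h5 : lam • sstar + pstar = 0)
    (h6 : dstar = Grad ustar) :
    ⟪gradDk - gradDstar, u1 - ustar⟫ + ⟪rk1 - rstar, u1 - ustar⟫
      + lam * ⟪s1 - sstar, d1 - dstar⟫
      + (1 / 2) * (⟪u1 - ustar, Lk (u1 - ustar)⟫ - ⟪u0 - ustar, Lk (u0 - ustar)⟫
          + ⟪u1 - u0, Lk (u1 - u0)⟫)
      + (1 / (2 * α)) * (‖p1 - pstar‖ ^ 2 - ‖p0 - pstar‖ ^ 2)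
      - (α / 2) * ‖d1 - Grad u1‖ ^ 2
      + α * ⟪Grad (u0 - ustar) - (d0 - dstar), Grad (u1 - ustar)⟫
      + α * ⟪(d1 - dstar) - Grad (u1 - ustar), d1 - dstar⟫ = 0 := by
  have hα' : α ≠ 0 := ne_of_gt hα
  have hsa : ∀ x y : EuclideanSpace ℝ (Fin N), ⟪Lk x, y⟫ = ⟪x, Lk y⟫ := fun x y => by
    conv_lhs => rw [← hLk.adjoint_eq]
    exact ContinuousLinearMap.adjoint_inner_left Lk y x
  have hsym : ∀ x y : EuclideanSpace ℝ (Fin N), ⟪x, Lk y⟫ = ⟪y, Lk x⟫ := fun x y => by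
    rw [← hsa, real_inner_comm]
  have hq : d1 - Grad u1 = (d1 - dstar) - Grad (u1 - ustar) := by
    rw [h6, map_sub]; abel
  have hG0 : Grad u0 - d0 = Grad (u0 - ustar) - (d0 - dstar) := by
    rw [h6, map_sub]; abel
  -- combine h1 and h4
  have hsum : gradDk - gradDstar + (rk1 - rstar)
      = -(Lk (u1 - u0)) - α • Grad.adjoint (Grad (u0 - ustar) - (d0 - dstar))
        + (Grad.adjoint p0 - Grad.adjoint pstar) := by
    have hGa : Grad.adjoint (Grad u0 - d0 - α⁻¹ • p0)
        = Grad.adjoint (Grad (u0 - ustar) - (d0 - dstar)) - α⁻¹ • Grad.adjoint p0 := by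
      rw [← hG0, map_sub, map_smul]
    rw [hGa] at h1
    have h1' : gradDk + Lk (u1 - u0) + α • Grad.adjoint (Grad (u0 - ustar) - (d0 - dstar))
        - Grad.adjoint p0 + rk1 = 0 := by
      rw [← h1, smul_sub, smul_smul, mul_inv_cancel₀ hα', one_smul]; abel
    have e : gradDk - gradDstar + (rk1 - rstar)
        - (-(Lk (u1 - u0)) - α • Grad.adjoint (Grad (u0 - ustar) - (d0 - dstar))
          + (Grad.adjoint p0 - Grad.adjoint pstar))
        = (gradDk + Lk (u1 - u0) + α • Grad.adjoint (Grad (u0 - ustar) - (d0 - dstar))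
            - Grad.adjoint p0 + rk1)
          - (gradDstar - Grad.adjoint pstar + rstar) := by abel
    rw [← sub_eq_zero, e, h1', h4, sub_zero]
  have E1 : ⟪gradDk - gradDstar, u1 - ustar⟫ + ⟪rk1 - rstar, u1 - ustar⟫
      = -⟪u1 - u0, Lk (u1 - ustar)⟫
        - α * ⟪Grad (u0 - ustar) - (d0 - dstar), Grad (u1 - ustar)⟫
        + ⟪p0 - pstar, Grad (u1 - ustar)⟫ := by
    have h := congrArg (fun v => ⟪v, u1 - ustar⟫) hsum
    simp only [inner_add_left, inner_sub_left, inner_neg_left, real_inner_smul_left,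
      ContinuousLinearMap.adjoint_inner_left] at h
    have hL := hsa (u1 - u0) (u1 - ustar)
    simp only [inner_sub_left] at hL
    simp only [inner_sub_left]
    linear_combination h - hL
  -- combine h2, h5, h3
  have hlamdiff : lam • (s1 - sstar)
      = -(α • ((d1 - dstar) - Grad (u1 - ustar))) - (p0 - pstar) := by
    have h2' : lam • s1 + α • (d1 - Grad u1) + p0 = 0 := by
      rw [← h2, smul_add, smul_smul, mul_inv_cancel₀ hα', one_smul]; abel
    rw [← hq, smul_sub]
    have e : lam • s1 - lam • sstar - (-(α • (d1 - Grad u1)) - (p0 - pstar))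
        = (lam • s1 + α • (d1 - Grad u1) + p0) - (lam • sstar + pstar) := by abel
    rw [← sub_eq_zero, e, h2', h5, sub_zero]
  have E2 : lam * ⟪s1 - sstar, d1 - dstar⟫
      = -⟪p0 - pstar, d1 - dstar⟫
        - α * ⟪(d1 - dstar) - Grad (u1 - ustar), d1 - dstar⟫ := by
    have h := congrArg (fun v => ⟪v, d1 - dstar⟫) hlamdiff
    simp only [inner_sub_left, inner_neg_left, real_inner_smul_left] at h
    simp only [inner_sub_left]
    linear_combination h
  -- proximal-term identity
  have E3 : ⟪u1 - ustar, Lk (u1 - ustar)⟫ - ⟪u0 - ustar, Lk (u0 - ustar)⟫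
      + ⟪u1 - u0, Lk (u1 - u0)⟫ = 2 * ⟪u1 - u0, Lk (u1 - ustar)⟫ := by
    simp only [map_sub, inner_sub_left, inner_sub_right]
    linear_combination hsym u1 ustar + hsym ustar u0 + hsym u0 u1
  -- dual-variable identity
  have hpe : p1 - pstar = (p0 - pstar) + α • (d1 - Grad u1) := by
    rw [h3]; abel
  have E4 : ‖p1 - pstar‖ ^ 2 = ‖p0 - pstar‖ ^ 2 + 2 * (α * ⟪p0 - pstar, d1 - Grad u1⟫)
      + α ^ 2 * ‖d1 - Grad u1‖ ^ 2 := by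
    rw [hpe, norm_add_sq_real, real_inner_smul_right, norm_smul, Real.norm_eq_abs,
      mul_pow, sq_abs]
  have hpd : ⟪p0 - pstar, d1 - Grad u1⟫
      = ⟪p0 - pstar, d1 - dstar⟫ - ⟪p0 - pstar, Grad (u1 - ustar)⟫ := by
    rw [hq, inner_sub_right]
  have E4' : (1 / (2 * α)) * (‖p1 - pstar‖ ^ 2 - ‖p0 - pstar‖ ^ 2)
      = ⟪p0 - pstar, d1 - dstar⟫ - ⟪p0 - pstar, Grad (u1 - ustar)⟫
        + (α / 2) * ‖d1 - Grad u1‖ ^ 2 := by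
    rw [E4, hpd]; field_simp; ring
  linear_combination E1 + E2 + (1 / 2) * E3 + E4'
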